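/- arXiv:2009.07302 — 2 statements merged into one kernel-verified Lean document; each statement's English description precedes it below -/
import Mathlib

section
/- Let (T, η, μ) be a strictly positive monad on the category of sets and let (A, e : TA → A) be an indiscrete T-algebra. Then the partial evaluation relation on TA is the identity relation (t₁ is a partial evaluation of t₀ only if t₀ = t₁), and the structure map e : TA → A is a bijection. -/
open CategoryTheory

universe u

/-!
If `t₁` is a partial evaluation of `η x`, strict positivity forces the witness to be `η (η x)`,
so `t₁ = η x`. In an indiscrete algebra every `t` is a partial evaluation of `η (e t)`, hence
`t = η (e t)`: thus `e` is injective, and since partial evaluation preserves `e`, it relates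
only equal elements.
-/

namespace CategoryTheory.Monad

def IsStrictlyPositive (T : Monad (Type u)) : Prop :=
  ∀ (X : Type u) (x : X) (τ : T.obj (T.obj X)),
    T.μ.app X τ = T.η.app X x → τ = T.η.app (T.obj X) (T.η.app X x)

variable {T : Monad (Type u)}

namespace Algebra

variable (A : T.Algebra)

def IsPartialEvaluation (t₀ t₁ : T.obj A.A) : Prop :=
  ∃ τ : T.obj (T.obj A.A), T.μ.app A.A τ = t₀ ∧ T.map A.a τ = t₁

def IsIndiscrete : Prop :=
  ∀ t₀ t₁ : T.obj A.A, A.a t₀ = A.a t₁ → A.IsPartialEvaluation t₀ t₁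

variable {A}

theorem a_η_apply (x : A.A) : A.a (T.η.app A.A x) = x :=
  ConcreteCategory.congr_hom A.unit x

theorem IsPartialEvaluation.a_eq {t₀ t₁ : T.obj A.A} (h : A.IsPartialEvaluation t₀ t₁) :
    A.a t₀ = A.a t₁ := by
  obtain ⟨τ, rfl, rfl⟩ := h
  exact ConcreteCategory.congr_hom A.assoc τ

theorem IsPartialEvaluation.eq_η_of_isStrictlyPositive (hT : T.IsStrictlyPositive) {x : A.A}
    {t : T.obj A.A} (h : A.IsPartialEvaluation (T.η.app A.A x) t) : t = T.η.app A.A x := by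
  obtain ⟨τ, hμ, rfl⟩ := h
  rw [hT A.A x τ hμ, ← NatTrans.naturality_apply]
  exact congrArg (T.η.app A.A) (a_η_apply x)

theorem IsIndiscrete.eq_η_a (hT : T.IsStrictlyPositive) (hA : A.IsIndiscrete) (t : T.obj A.A) :
    t = T.η.app A.A (A.a t) :=
  (hA _ t (a_η_apply _)).eq_η_of_isStrictlyPositive hT

theorem IsIndiscrete.bijective_a (hT : T.IsStrictlyPositive) (hA : A.IsIndiscrete) :
    Function.Bijective A.a :=
  ⟨fun t₀ t₁ h => by rw [hA.eq_η_a hT t₀, hA.eq_η_a hT t₁, h],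
    fun x => ⟨T.η.app A.A x, a_η_apply x⟩⟩

theorem IsIndiscrete.eq_of_isPartialEvaluation (hT : T.IsStrictlyPositive)
    (hA : A.IsIndiscrete) {t₀ t₁ : T.obj A.A} (h : A.IsPartialEvaluation t₀ t₁) : t₀ = t₁ :=
  (hA.bijective_a hT).injective h.a_eq

end Algebra

end CategoryTheory.Monad

/-- For a strictly positive monad on `Set` and an indiscrete algebra `(A, e)`, the
partial evaluation relation on `TA` is the identity relation and `e` is a bijection. -/
theorem strictly_positive_indiscrete_algebra
    (T : CategoryTheory.Monad (Type u))
    (hpos : ∀ (X : Type u) (x : X) (τ : T.obj (T.obj X)),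
      T.μ.app X τ = T.η.app X x → τ = T.η.app (T.obj X) (T.η.app X x))
    (A : T.Algebra)
    (hind : ∀ t₀ t₁ : T.obj A.A, A.a t₀ = A.a t₁ →
      ∃ τ : T.obj (T.obj A.A), T.μ.app A.A τ = t₀ ∧ T.map A.a τ = t₁) :
    (∀ t₀ t₁ : T.obj A.A,
      (∃ τ : T.obj (T.obj A.A), T.μ.app A.A τ = t₀ ∧ T.map A.a τ = t₁) → t₀ = t₁)
    ∧ Function.Bijective A.a :=
  ⟨fun _ _ => Monad.Algebra.IsIndiscrete.eq_of_isPartialEvaluation hpos hind,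
    Monad.Algebra.IsIndiscrete.bijective_a hpos hind⟩
end

section
/- Let (T, η, μ) be a monad on the category of sets which preserves weak pullbacks and is strictly positive. Then for every set X and every natural number k, the k-fold T-image of the strict positivity square is a pullback: for all τ ∈ T^{k+2}X and u ∈ T^{k}X, if (T^{k}μ_X)(τ) = (T^{k}η_X)(u), then τ = (T^{k}(η_{TX} ∘ η_X))(u). Consequently, for a weakly cartesian strictly positive monad, the bar construction of any T-algebra is both inner span complete and split. -/
/-!
The strict positivity square has an identity side, so it is a pullback as soon as it is a weak
pullback. A functor preserving weak pullbacks therefore sends it to a weak pullback with an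
identity side, i.e. again to a pullback, and induction on `k` handles all `T`-powers.
-/

open CategoryTheory

universe u

/-- Iterated application of (the functor part of) a monad on `Set`. -/
def Tpow (T : CategoryTheory.Monad (Type u)) : ℕ → Type u → Type u
  | 0, X => X
  | k + 1, X => T.obj (Tpow T k X)

/-- Iterated application of the monad functor to a function. -/
def TpowMap (T : CategoryTheory.Monad (Type u)) :
    (k : ℕ) → {X Y : Type u} → (X → Y) → Tpow T k X → Tpow T k Y
  | 0, _, _, f => f
  | k + 1, _, _, f => T.map (TypeCat.ofHom (TpowMap T k f))

def PreservesWeakPullbacks (F : Type u ⥤ Type u) : Prop :=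
  ∀ {A B C D : Type u} (f : A → B) (g : A → C) (m : B → D) (n : C → D),
    (∀ a, m (f a) = n (g a)) →
    (∀ (b : B) (c : C), m b = n c → ∃ a : A, f a = b ∧ g a = c) →
    ∀ (b : F.obj B) (c : F.obj C), F.map (TypeCat.ofHom m) b = F.map (TypeCat.ofHom n) c →
      ∃ a : F.obj A, F.map (TypeCat.ofHom f) a = b ∧ F.map (TypeCat.ofHom g) a = c

/-- `hcomm` and `hpb` say that the square with sides `f`, `id`, `m`, `n` is a pullback. -/
theorem PreservesWeakPullbacks.eq_map_of_map_eq_map {F : Type u ⥤ Type u}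
    (hF : PreservesWeakPullbacks F) {A B D : Type u} {f : A → B} {m : B → D} {n : A → D}
    (hcomm : ∀ a, m (f a) = n a) (hpb : ∀ b a, m b = n a → b = f a)
    (b : F.obj B) (a : F.obj A) (h : F.map (TypeCat.ofHom m) b = F.map (TypeCat.ofHom n) a) :
    b = F.map (TypeCat.ofHom f) a := by
  obtain ⟨a', hfa', ha'⟩ := hF f id m n hcomm (fun b a h => ⟨a, (hpb b a h).symm, rfl⟩) b a h
  have map_id_apply : F.map (TypeCat.ofHom id) a' = a' :=
    ConcreteCategory.congr_hom (F.map_id A) a'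
  rw [← hfa', ← map_id_apply.symm.trans ha']

theorem TpowMap_comp (T : Monad (Type u)) (k : ℕ) {X Y Z : Type u}
    (f : X → Y) (g : Y → Z) (x : Tpow T k X) :
    TpowMap T k (fun a => g (f a)) x = TpowMap T k g (TpowMap T k f x) := by
  induction k generalizing X Y Z with
  | zero => rfl
  | succ k ih =>
    show T.map (TypeCat.ofHom _) x = T.map (TypeCat.ofHom _) (T.map (TypeCat.ofHom _) x)
    rw [show TpowMap T k (fun a => g (f a)) = fun a => TpowMap T k g (TpowMap T k f a) from
      funext (ih f g)]
    exact ConcreteCategory.congr_hom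
      (T.map_comp (TypeCat.ofHom (TpowMap T k f)) (TypeCat.ofHom (TpowMap T k g))) x

theorem TpowMap_eq_of_TpowMap_eq_TpowMap {T : Monad (Type u)}
    (hT : PreservesWeakPullbacks T.toFunctor) {A B D : Type u} {f : A → B} {m : B → D}
    {n : A → D} (hcomm : ∀ a, m (f a) = n a) (hpb : ∀ b a, m b = n a → b = f a) (k : ℕ)
    (b : Tpow T k B) (a : Tpow T k A) (h : TpowMap T k m b = TpowMap T k n a) :
    b = TpowMap T k f a := by
  induction k with
  | zero => exact hpb b a h
  | succ k ih =>
    refine hT.eq_map_of_map_eq_map (fun a => ?_) ih b a h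
    rw [← TpowMap_comp]
    exact congrArg (TpowMap T k · a) (funext hcomm)

/-- For a strictly positive monad on `Set` whose functor preserves weak pullbacks,
every `k`-fold `T`-image of the strict positivity square is a pullback: if
`(T^k μ)(τ) = (T^k η)(u)` then `τ = (T^k (η ∘ η))(u)`. Consequently the bar
construction of any algebra of a weakly cartesian strictly positive monad is
inner span complete and split. -/
theorem strictly_positive_powers_pullback
    (T : CategoryTheory.Monad (Type u))
    (hT : ∀ {A B C D : Type u} (f : A → B) (g : A → C) (m : B → D) (n : C → D),
      (∀ a, m (f a) = n (g a)) →
      (∀ (b : B) (c : C), m b = n c → ∃ a : A, f a = b ∧ g a = c) →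
      ∀ (b : T.obj B) (c : T.obj C), T.map (TypeCat.ofHom m) b = T.map (TypeCat.ofHom n) c →
        ∃ a : T.obj A, T.map (TypeCat.ofHom f) a = b ∧ T.map (TypeCat.ofHom g) a = c)
    (hpos : ∀ (X : Type u) (x : X) (τ : T.obj (T.obj X)),
      T.μ.app X τ = T.η.app X x → τ = T.η.app (T.obj X) (T.η.app X x)) :
    ∀ (k : ℕ) (X : Type u) (τ : Tpow T k (T.obj (T.obj X))) (u : Tpow T k X),
      TpowMap T k (T.μ.app X) τ = TpowMap T k (T.η.app X) u →
      τ = TpowMap T k (fun x => T.η.app (T.obj X) (T.η.app X x)) u := by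
  intro k X
  have unit_square : ∀ x, T.μ.app X (T.η.app (T.obj X) (T.η.app X x)) = T.η.app X x :=
    fun x => ConcreteCategory.congr_hom (T.left_unit X) (T.η.app X x)
  exact TpowMap_eq_of_TpowMap_eq_TpowMap hT unit_square (fun τ x => hpos X x τ) k
end
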